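/- arXiv:1410.3717 — 2 statements merged into one kernel-verified Lean document; each statement's English description precedes it below -/
import Mathlib

section
/- Let $K = (-3,3)^2 \subset \mathbb{R}^2$, $K_1 = (-2,-1)\times(-1,1)$, $K_2 = (1,2)\times(-1,1)$, and for $\delta > 0$ define the weight $\alpha(x) = \delta^{-1}$ for $x \in K_1 \cup K_2$ and $\alpha(x) = 1$ otherwise. Define $u(x) = x_1$ for $|x_1| \le 1$, $u(x) = 1$ for $1 < x_1 < 3$, $u(x) = -1$ for $-3 < x_1 < -1$. Then $u \in H^1(K)$ and $\inf_{\mu\in\mathbb{R}} \|u - \mu\|_{L^2_\alpha(K)} / \|\nabla u\|_{L^2_\alpha(K)} \ge 1/\sqrt{3\delta}$. In particular, the weighted Poincaré constant $\sup_{u\in H^1(K)}\inf_{\mu}\|u-\mu\|_{L^2_\alpha(K)}/\|\nabla u\|_{L^2_\alpha(K)}$ is unbounded as $\delta \to 0$. -/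
open MeasureTheory Set

/-!
On the inclusions `K₁` and `K₂` the profile `u` is constant, `-1` and `1` respectively, so their
weight `δ⁻¹` alone gives `∫_K α (u - μ)² ≥ 2δ⁻¹((1 + μ)² + (1 - μ)²) ≥ 4δ⁻¹`. The gradient, on the
other hand, lives on the strip `|x₁| < 1`, which misses both inclusions, so `∫_K α |∇u|²` is the
area `12` of `(-1, 1) × (-3, 3)`. The quotient is therefore at least `√(4δ⁻¹ / 12) = 1 / √(3δ)`.
-/

abbrev squareK : Set (ℝ × ℝ) := Ioo (-3 : ℝ) 3 ×ˢ Ioo (-3 : ℝ) 3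
abbrev inclusionK₁ : Set (ℝ × ℝ) := Ioo (-2 : ℝ) (-1) ×ˢ Ioo (-1 : ℝ) 1
abbrev inclusionK₂ : Set (ℝ × ℝ) := Ioo (1 : ℝ) 2 ×ˢ Ioo (-1 : ℝ) 1

lemma volume_real_Ioo_prod_Ioo {a b c d : ℝ} (hab : a ≤ b) (hcd : c ≤ d) :
    volume.real (Ioo a b ×ˢ Ioo c d) = (b - a) * (d - c) := by
  rw [Measure.volume_eq_prod, measureReal_prod_prod, Real.volume_real_Ioo_of_le hab,
    Real.volume_real_Ioo_of_le hcd]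

section SetIntegral

variable {X : Type*} [MeasurableSpace X] {μ : Measure X} {f : X → ℝ}

lemma setIntegral_eq_measureReal_mul_of_eqOn {s : Set X} {c : ℝ} (hs : MeasurableSet s)
    (hf : EqOn f (fun _ ↦ c) s) : ∫ x in s, f x ∂μ = μ.real s * c := by
  rw [setIntegral_congr_fun hs hf, setIntegral_const, smul_eq_mul]

lemma setIntegral_add_setIntegral_le {s₁ s₂ t : Set X} (hf : IntegrableOn f t μ)
    (hf₀ : 0 ≤ᵐ[μ.restrict t] f) (hs₂ : MeasurableSet s₂) (hdisj : Disjoint s₁ s₂)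
    (hsub : s₁ ∪ s₂ ⊆ t) :
    ∫ x in s₁, f x ∂μ + ∫ x in s₂, f x ∂μ ≤ ∫ x in t, f x ∂μ := by
  rw [← setIntegral_union hdisj hs₂ (hf.mono_set (subset_union_left.trans hsub))
    (hf.mono_set (subset_union_right.trans hsub))]
  exact setIntegral_mono_set hf hf₀ hsub.eventuallyLE

lemma integrableOn_two_valued_mul {S t : Set X} {α g : X → ℝ} {a b C : ℝ} (hS : MeasurableSet S)
    (ht : μ t ≠ ⊤) (hα : ∀ x, (x ∈ S → α x = a) ∧ (x ∉ S → α x = b))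
    (hg : AEStronglyMeasurable g (μ.restrict t)) (hgC : ∀ x, ‖g x‖ ≤ C) :
    IntegrableOn (fun x ↦ α x * g x) t μ := by
  classical
  have hα_eq : α = S.piecewise (fun _ ↦ a) (fun _ ↦ b) := by
    funext x
    by_cases hx : x ∈ S <;> simp [hx, (hα x).1, (hα x).2]
  have hα_bdd : ∀ x, ‖α x‖ ≤ max ‖a‖ ‖b‖ := fun x ↦ by
    by_cases hx : x ∈ S
    · rw [(hα x).1 hx]; exact le_max_left _ _
    · rw [(hα x).2 hx]; exact le_max_right _ _
  have hα_meas : Measurable α := hα_eq ▸ measurable_const.piecewise hS measurable_const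
  exact (Measure.integrableOn_of_bounded ht hα_meas.aestronglyMeasurable
    (ae_of_all _ hα_bdd)).mul_bdd hg (ae_of_all _ hgC)

end SetIntegral

lemma lipschitzWith_one_clamp_fst :
    LipschitzWith 1 (fun x : ℝ × ℝ ↦ max (-1) (min 1 x.1)) :=
  (LipschitzWith.prod_fst.const_min 1).const_max (-1)

lemma abs_clamp_le_one (t : ℝ) : |max (-1) (min 1 t)| ≤ 1 :=
  abs_le.2 ⟨le_max_left _ _, max_le (by norm_num) (min_le_left _ _)⟩

lemma clamp_of_le_neg_one {t : ℝ} (ht : t ≤ -1) : max (-1) (min 1 t) = -1 := by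
  rw [min_eq_right (by linarith), max_eq_left ht]

lemma clamp_of_one_le {t : ℝ} (ht : 1 ≤ t) : max (-1) (min 1 t) = 1 := by
  rw [min_eq_left ht, max_eq_right (by norm_num)]

lemma setIntegral_weight_mul_gradsq {α g : ℝ × ℝ → ℝ}
    (hα : ∀ x ∉ inclusionK₁ ∪ inclusionK₂, α x = 1)
    (hg : ∀ x : ℝ × ℝ, (x.1 ∈ Ioo (-1 : ℝ) 1 → g x = 1) ∧ (x.1 ∉ Ioo (-1 : ℝ) 1 → g x = 0)) :
    ∫ x in squareK, α x * g x = 12 := by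
  have hstrip : (fun x ↦ α x * g x) = (Ioo (-1 : ℝ) 1 ×ˢ univ).indicator 1 := by
    funext x
    by_cases hx : x.1 ∈ Ioo (-1 : ℝ) 1
    · have hx' : x ∉ inclusionK₁ ∪ inclusionK₂ := by
        rintro (⟨h, -⟩ | ⟨h, -⟩) <;> simp only [mem_Ioo] at h hx <;> linarith
      simp [hα x hx', (hg x).1 hx, hx]
    · simp [(hg x).2 hx, hx]
  have hK : squareK ∩ Ioo (-1 : ℝ) 1 ×ˢ univ = Ioo (-1 : ℝ) 1 ×ˢ Ioo (-3 : ℝ) 3 := by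
    rw [prod_inter_prod, inter_univ, Ioo_inter_Ioo]
    norm_num
  rw [hstrip, setIntegral_indicator (measurableSet_Ioo.prod .univ), hK, Pi.one_def,
    setIntegral_const, volume_real_Ioo_prod_Ioo (by norm_num) (by norm_num)]
  norm_num

lemma integrableOn_weight_mul_sq {δ μ : ℝ} {α : ℝ × ℝ → ℝ}
    (hα : ∀ x, (x ∈ inclusionK₁ ∪ inclusionK₂ → α x = δ⁻¹) ∧
      (x ∉ inclusionK₁ ∪ inclusionK₂ → α x = 1)) :
    IntegrableOn (fun x ↦ α x * (max (-1) (min 1 x.1) - μ) ^ 2) squareK := by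
  refine integrableOn_two_valued_mul
    ((measurableSet_Ioo.prod measurableSet_Ioo).union (measurableSet_Ioo.prod measurableSet_Ioo))
    (Metric.isBounded_Ioo _ _ |>.prod (Metric.isBounded_Ioo _ _)).measure_lt_top.ne hα
    ((lipschitzWith_one_clamp_fst.continuous.sub continuous_const).pow 2).aestronglyMeasurable
    (C := (1 + |μ|) ^ 2) fun x ↦ ?_
  rw [norm_pow, Real.norm_eq_abs]
  gcongr
  exact (abs_sub _ _).trans (by linarith [abs_clamp_le_one x.1])

lemma div_le_setIntegral_weight_mul_sq {δ μ : ℝ} (hδ : 0 < δ) {α : ℝ × ℝ → ℝ}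
    (hα : ∀ x, (x ∈ inclusionK₁ ∪ inclusionK₂ → α x = δ⁻¹) ∧
      (x ∉ inclusionK₁ ∪ inclusionK₂ → α x = 1)) :
    4 / δ ≤ ∫ x in squareK, α x * (max (-1) (min 1 x.1) - μ) ^ 2 := by
  have hα₀ : ∀ x, 0 ≤ α x := fun x ↦ by
    by_cases hx : x ∈ inclusionK₁ ∪ inclusionK₂
    · rw [(hα x).1 hx]; positivity
    · rw [(hα x).2 hx]; norm_num
  have h₁ : EqOn (fun x ↦ α x * (max (-1) (min 1 x.1) - μ) ^ 2)
      (fun _ ↦ δ⁻¹ * (-1 - μ) ^ 2) inclusionK₁ := fun x hx ↦ by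
    simp only [(hα x).1 (.inl hx), clamp_of_le_neg_one hx.1.2.le]
  have h₂ : EqOn (fun x ↦ α x * (max (-1) (min 1 x.1) - μ) ^ 2)
      (fun _ ↦ δ⁻¹ * (1 - μ) ^ 2) inclusionK₂ := fun x hx ↦ by
    simp only [(hα x).1 (.inr hx), clamp_of_one_le hx.1.1.le]
  have hsub : inclusionK₁ ∪ inclusionK₂ ⊆ squareK := by
    rintro x (⟨⟨h₁, h₂⟩, h₃, h₄⟩ | ⟨⟨h₁, h₂⟩, h₃, h₄⟩) <;>
      exact ⟨⟨by linarith, by linarith⟩, by linarith, by linarith⟩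
  have hdisj : Disjoint inclusionK₁ inclusionK₂ := disjoint_left.2 fun x h₁ h₂ ↦ by
    linarith [h₁.1.2, h₂.1.1]
  calc 4 / δ ≤ 2 * (δ⁻¹ * (-1 - μ) ^ 2) + 2 * (δ⁻¹ * (1 - μ) ^ 2) := by
        rw [div_eq_mul_inv]; nlinarith [sq_nonneg μ, inv_pos.2 hδ]
    _ = _ := by
        rw [setIntegral_eq_measureReal_mul_of_eqOn (measurableSet_Ioo.prod measurableSet_Ioo) h₁,
          setIntegral_eq_measureReal_mul_of_eqOn (measurableSet_Ioo.prod measurableSet_Ioo) h₂,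
          volume_real_Ioo_prod_Ioo (by norm_num) (by norm_num),
          volume_real_Ioo_prod_Ioo (by norm_num) (by norm_num)]
        norm_num
    _ ≤ _ := setIntegral_add_setIntegral_le (integrableOn_weight_mul_sq hα)
      (ae_of_all _ fun x ↦ mul_nonneg (hα₀ x) (sq_nonneg _))
      (measurableSet_Ioo.prod measurableSet_Ioo) hdisj hsub

/-- **High-contrast example** (Example 3.2): on `K = (-3,3)²` with weight `α = δ⁻¹`
on the two inclusions `K₁, K₂` and `1` elsewhere, the truncated linear profile
`u(x) = max(-1, min(1, x₁))` lies in `H¹(K)` (it is Lipschitz) and satisfies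
`inf_μ ‖u-μ‖_{L²_α(K)} / ‖∇u‖_{L²_α(K)} ≥ 1/√(3δ)`; hence the weighted Poincaré
constant blows up as `δ → 0`. -/
theorem stmt_2 (δ : ℝ) (hδ : 0 < δ)
    (K K1 K2 : Set (ℝ × ℝ))
    (hK : K = Set.Ioo (-3 : ℝ) 3 ×ˢ Set.Ioo (-3 : ℝ) 3)
    (hK1 : K1 = Set.Ioo (-2 : ℝ) (-1) ×ˢ Set.Ioo (-1 : ℝ) 1)
    (hK2 : K2 = Set.Ioo (1 : ℝ) 2 ×ˢ Set.Ioo (-1 : ℝ) 1)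
    (α : ℝ × ℝ → ℝ)
    (hα : ∀ x, (x ∈ K1 ∪ K2 → α x = δ⁻¹) ∧ (x ∉ K1 ∪ K2 → α x = 1))
    (u : ℝ × ℝ → ℝ) (hu : u = fun x => max (-1) (min 1 x.1))
    (gradsq : ℝ × ℝ → ℝ)  -- `|∇u|²`, equal to 1 on `{|x₁| < 1}` and 0 elsewhere
    (hgrad : ∀ x : ℝ × ℝ, (x.1 ∈ Set.Ioo (-1 : ℝ) 1 → gradsq x = 1) ∧
      (x.1 ∉ Set.Ioo (-1 : ℝ) 1 → gradsq x = 0)) :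
    LipschitzWith 1 u ∧
      ∀ μ : ℝ,
        1 / Real.sqrt (3 * δ) ≤
          Real.sqrt (∫ x in K, α x * (u x - μ) ^ 2) /
            Real.sqrt (∫ x in K, α x * gradsq x) := by
  subst hK hK1 hK2 hu
  refine ⟨lipschitzWith_one_clamp_fst, fun μ ↦ ?_⟩
  rw [setIntegral_weight_mul_gradsq (fun x ↦ (hα x).2) hgrad]
  calc 1 / √(3 * δ) = √(4 / δ) / √12 := by
        rw [← Real.sqrt_div (by positivity), one_div, ← Real.sqrt_inv]
        congr 1
        field_simp
        norm_num
    _ ≤ _ := by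
        gcongr
        exact div_le_setIntegral_weight_mul_sq hδ hα
end

section
/- (Geometric iteration core of Theorem 3.7.) Let $(V, \|\cdot\|_j)_{j=0,\dots,\ell}$ be a vector space with $\ell$ semi-norms, let $X \subset V$ be a subspace, and suppose for each $j = 1,\dots,\ell$ there is a subspace $Y_j \subset X$ with $\dim Y_j \le p$ such that for every $u \in X$, $\inf_{v\in Y_j}\|u - v\|_j \le q\,\|u\|_{j-1}$. Then the subspace $X_k = Y_1 + \cdots + Y_\ell$ has dimension at most $p\ell$ and satisfies $\inf_{v\in X_k}\|u - v\|_\ell \le q^\ell\|u\|_0$ for all $u \in X$. -/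
lemma stmt_13_aux {V : Type*} [AddCommGroup V] [Module ℝ V] {ι : Type*}
    (Y : ι → Submodule ℝ V) (p : ℕ)
    (hfin : ∀ i, FiniteDimensional ℝ (Y i))
    (hd : ∀ i, Module.finrank ℝ (Y i) ≤ p) (s : Finset ι) :
    Module.finrank ℝ ↥(s.sup Y) ≤ s.card * p := by
  classical
  induction s using Finset.induction with
  | empty => simp
  | @insert a s ha ih =>
    rw [Finset.sup_insert, Finset.card_insert_of_notMem ha]
    haveI := hfin a
    haveI : FiniteDimensional ℝ ↥(s.sup Y) := Submodule.finiteDimensional_finset_sup s Y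
    calc Module.finrank ℝ ↥(Y a ⊔ s.sup Y)
        ≤ Module.finrank ℝ (Y a) + Module.finrank ℝ ↥(s.sup Y) :=
          Submodule.finrank_add_le_finrank_add_finrank _ _
      _ ≤ p + s.card * p := add_le_add (hd a) ih
      _ = (s.card + 1) * p := by ring

/-- **Geometric iteration core of Theorem 3.7**: given semi-norms `N 0, …, N ℓ`
on `V`, a subspace `X`, and for each `j` a subspace `Y j ≤ X` of dimension at
most `p` with `inf_{v ∈ Y j} N (j+1) (u − v) ≤ q N j u` for all `u ∈ X`, the
subspace `X_k = Y 1 + ⋯ + Y ℓ` has dimension at most `p ℓ` and satisfies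
`inf_{v ∈ X_k} N ℓ (u − v) ≤ q^ℓ N 0 u` for all `u ∈ X`. -/
theorem stmt_13 {V : Type*} [AddCommGroup V] [Module ℝ V]
    (ℓ p : ℕ) (q : ℝ) (hq : 0 ≤ q)
    (N : ℕ → V → ℝ)
    (hN_add : ∀ j (x y : V), N j (x + y) ≤ N j x + N j y)
    (hN_smul : ∀ j (r : ℝ) (x : V), N j (r • x) = |r| * N j x)
    (X : Submodule ℝ V) (Y : Fin ℓ → Submodule ℝ V)
    (hYX : ∀ j, Y j ≤ X)
    (hYdim : ∀ j, Module.finrank ℝ (Y j) ≤ p)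
    (happrox : ∀ j : Fin ℓ, ∀ u ∈ X, ∃ v ∈ Y j,
      N ((j : ℕ) + 1) (u - v) ≤ q * N (j : ℕ) u) :
    Module.finrank ℝ (⨆ j, Y j : Submodule ℝ V) ≤ p * ℓ ∧
      ∀ u ∈ X, ∃ v ∈ (⨆ j, Y j : Submodule ℝ V),
        N ℓ (u - v) ≤ q ^ ℓ * N 0 u := by
  classical
  constructor
  · by_cases hfd : ∀ j, FiniteDimensional ℝ (Y j)
    · have : (⨆ j, Y j : Submodule ℝ V) = Finset.univ.sup Y := by
        rw [Finset.sup_univ_eq_iSup]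
      rw [this]
      calc Module.finrank ℝ ↥(Finset.univ.sup Y)
          ≤ (Finset.univ : Finset (Fin ℓ)).card * p := stmt_13_aux Y p hfd hYdim _
        _ = ℓ * p := by simp
        _ = p * ℓ := Nat.mul_comm _ _
    · push_neg at hfd
      obtain ⟨j, hj⟩ := hfd
      have : ¬ FiniteDimensional ℝ (⨆ j, Y j : Submodule ℝ V) := by
        intro h
        exact hj (Submodule.finiteDimensional_of_le (le_iSup Y j))
      rw [Module.finrank_of_infinite_dimensional this]
      exact Nat.zero_le _
  · intro u hu
    have key : ∀ k, k ≤ ℓ → ∃ v ∈ (⨆ j, Y j : Submodule ℝ V),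
        u - v ∈ X ∧ N k (u - v) ≤ q ^ k * N 0 u := by
      intro k
      induction k with
      | zero =>
        intro _
        exact ⟨0, Submodule.zero_mem _, by simpa using hu, by simp⟩
      | succ k ih =>
        intro hk
        obtain ⟨v, hv, hvX, hvN⟩ := ih (Nat.le_of_succ_le hk)
        obtain ⟨w, hw, hwN⟩ := happrox ⟨k, hk⟩ (u - v) hvX
        refine ⟨v + w, Submodule.add_mem _ hv (le_iSup Y ⟨k, hk⟩ hw), ?_, ?_⟩
        · rw [sub_add_eq_sub_sub]
          exact Submodule.sub_mem _ hvX (hYX ⟨k, hk⟩ hw)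
        · rw [sub_add_eq_sub_sub]
          calc N (k + 1) (u - v - w) ≤ q * N k (u - v) := hwN
            _ ≤ q * (q ^ k * N 0 u) := mul_le_mul_of_nonneg_left hvN hq
            _ = q ^ (k + 1) * N 0 u := by ring
    obtain ⟨v, hv, _, hvN⟩ := key ℓ le_rfl
    exact ⟨v, hv, hvN⟩
end
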